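/- arXiv:2105.08951 — 2 statements merged into one kernel-verified Lean document; each statement's English description precedes it below -/
import Mathlib

section
/- The following two schemes are logically equivalent: (i) for every type B and every predicate T on B*, if T is productive then T has an infinite branch; (ii) for every type B, every binary relation R on B, and every b₀ ∈ B, if R is serial (∀ b, ∃ b', R(b,b')) then the positive alignment R▷⊤(b₀) has an infinite branch. -/
namespace BarInd

variable {A B : Type*}

/-- `u` is an initial prefix of the infinite sequence `α`. -/
def SeqPrefix (u : List B) (α : ℕ → B) : Prop := ∀ i : Fin u.length, u.get i = α i

/-- `T` is a tree: closed under restriction. -/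
def IsTree (T : List B → Prop) : Prop := ∀ u a, T (u ++ [a]) → T u
/-- `T` is monotone: closed under extension. -/
def IsMono (T : List B → Prop) : Prop := ∀ u a, T u → T (u ++ [a])
/-- Downwards arborification `⌊T⌋`. -/
def DownArbor (T : List B → Prop) : List B → Prop := fun u => ∀ u', u' <+: u → T u'
/-- Upwards monotonisation `⌈T⌉`. -/
def UpMonot (T : List B → Prop) : List B → Prop := fun u => ∃ u', u' <+: u ∧ T u'
def UnboundedPaths (T : List B → Prop) : Prop := ∀ n, ∃ u, u.length = n ∧ DownArbor T u
def StagedInfinite (T : List B → Prop) : Prop := ∀ n, ∃ u : List B, u.length = n ∧ T u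
def UniformlyBarred (T : List B → Prop) : Prop := ∃ n, ∀ u : List B, u.length = n → UpMonot T u
def StagedBarred (T : List B → Prop) : Prop := ∃ n, ∀ u : List B, u.length = n → T u

/-- `u` is in the pruning of `T` (coinductive/greatest fixed point, impredicative encoding). -/
def Pruning (T : List B → Prop) (u : List B) : Prop :=
  ∃ X : List B → Prop, X u ∧ ∀ v, X v → T v ∧ ∃ a, X (v ++ [a])
def Productive (T : List B → Prop) : Prop := Pruning T []

/-- Hereditary closure of `T` (least fixed point). -/
inductive HerClos (T : List B → Prop) : List B → Prop
  | base (u : List B) : T u → HerClos T u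
  | step (u : List B) : (∀ a, HerClos T (u ++ [a])) → HerClos T u

def IndBarred (T : List B → Prop) : Prop := HerClos T []
def Spread (T : List B → Prop) : Prop := T [] ∧ ∀ u, T u → ∃ a, T (u ++ [a])
def Hereditary (T : List B → Prop) : Prop := ∀ u, (∀ a, T (u ++ [a])) → T u
def Barricaded (T : List B → Prop) : Prop := Hereditary T → T []
def InfBranch (T : List B → Prop) : Prop := ∃ α : ℕ → B, ∀ u, SeqPrefix u α → T u
def Barred (T : List B → Prop) : Prop := ∀ α : ℕ → B, ∃ u, SeqPrefix u α ∧ T u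

/- Finite approximations of functions: sequences of pairs. -/

/-- `v ⊆ v'` : every pair occurring in `v` occurs in `v'`. -/
def PSub (v v' : List (A × B)) : Prop := ∀ x, x ∈ v → x ∈ v'
/-- `a` is in the domain of `w`. -/
def InDom (w : List (A × B)) (a : A) : Prop := ∃ b, (a, b) ∈ w
/-- `T` is `A`-`B`-approximable from `v` (coinductive, impredicative encoding). -/
def ApproxFrom (T : List (A × B) → Prop) (v : List (A × B)) : Prop :=
  ∃ X : List (A × B) → Prop, X v ∧
    ∀ w, X w → ((∀ v', PSub v' w → T v') ∧ ∀ a, ¬ InDom w a → ∃ b, X (w ++ [(a, b)]))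
/-- `T` is `A`-`B`-approximable. -/
def Approximable (T : List (A × B) → Prop) : Prop := ApproxFrom T []

/-- `T` is inductively `A`-`B`-barred from a sequence (least fixed point). -/
inductive IndPairBarred (T : List (A × B) → Prop) : List (A × B) → Prop
  | base (w : List (A × B)) : (∃ v, PSub v w ∧ T v) → IndPairBarred T w
  | step (w : List (A × B)) (a : A) : ¬ InDom w a →
      (∀ b, IndPairBarred T (w ++ [(a, b)])) → IndPairBarred T w

def InductivelyPairBarred (T : List (A × B) → Prop) : Prop := IndPairBarred T []
/-- `v ≺ α` : `α a = b` for every `(a,b) ∈ v`. -/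
def PairPrefix (v : List (A × B)) (α : A → B) : Prop := ∀ p ∈ v, α p.1 = p.2
def PairChoiceFn (T : List (A × B) → Prop) : Prop := ∃ α : A → B, ∀ v, PairPrefix v α → T v
def PairBarred (T : List (A × B) → Prop) : Prop := ∀ α : A → B, ∃ v, PairPrefix v α ∧ T v

/-- `ord u` pairs each element of `u` with its position. -/
def ordSeq (u : List B) : List (ℕ × B) := u.zipIdx.map Prod.swap
/-- `T̂` : the lift of a predicate on `B*` to `(ℕ × B)*`. -/
def hatT (T : List B → Prop) : List (ℕ × B) → Prop := fun v => ∃ u, T u ∧ v = ordSeq u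
/-- `‖T‖` : the restriction of a predicate on `(ℕ × B)*` to sequential sequences. -/
def normT (T : List (ℕ × B) → Prop) : List B → Prop := fun u => T (ordSeq u)
/-- Upwards arborification w.r.t. `⊆`. -/
def UpPairArbor (S : List (A × B) → Prop) : List (A × B) → Prop :=
  fun v => ∃ v', PSub v v' ∧ S v'
/-- Upwards monotonisation w.r.t. `⊆`. -/
def UpPairMonot (S : List (A × B) → Prop) : List (A × B) → Prop :=
  fun v => ∃ v', PSub v' v ∧ S v'

/-- Chaining `R*⊤(b)` : all steps in `u` from `b` are in `R`. -/
def Chaining (R : B → B → Prop) : B → List B → Prop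
  | _, [] => True
  | b, b' :: u => R b b' ∧ Chaining R b' u

/-- Antichaining `R*⊥(b)`. -/
def Antichaining (R : B → B → Prop) : B → List B → Prop
  | _, [] => False
  | b, b' :: u => R b b' ∨ Antichaining R b' u

/-- Positive alignment `R▷⊤(b₀)`. -/
def PosAlign (R : B → B → Prop) (b₀ : B) (u : List B) : Prop :=
  match u.reverse with
  | [] => True
  | [b] => R b₀ b
  | b' :: b :: _ => R b b'

/-- Blockings `R▷⊥(b₀)`. -/
def Blockings (R : B → B → Prop) (b₀ : B) (u : List B) : Prop :=
  match u.reverse with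
  | [] => False
  | [b] => R b₀ b
  | b' :: b :: _ => R b b'

/-- Sequential positive alignment `R^ℕ⊤`. -/
def SeqPosAlign (R : ℕ → B → Prop) (u : List B) : Prop :=
  match u.reverse with
  | [] => True
  | b :: v => R v.length b

/-- Sequential negative alignment `R^ℕ⊥`. -/
def SeqNegAlign (R : ℕ → B → Prop) (u : List B) : Prop :=
  match u.reverse with
  | [] => False
  | b :: v => R v.length b

end BarInd

/-! A serial relation makes its positive alignment productive: every sequence can be extended by
an `R`-successor of its last element. Conversely, a productive `T` is witnessed by some `X` that
is contained in `T` and closed under one-step extension; the relation "`v` extends `u` by one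
element" on the sequences in `X` is serial, and a branch of its positive alignment from `⟨⟩` is a
chain `⟨⟩, ⟨β 0⟩, ⟨β 0, β 1⟩, …` in `X`, whose limit `β` is an infinite branch of `T`. -/

namespace BarInd

variable {B : Type*}

theorem seqPrefix_iff {u : List B} {α : ℕ → B} :
    SeqPrefix u α ↔ u = (List.range u.length).map α := by
  constructor
  · intro h
    exact List.ext_get (by simp) fun i hi _ => by simpa using h ⟨i, hi⟩
  · intro h ⟨i, hi⟩
    simpa using List.getElem_of_eq h hi

theorem seqPrefix_map_range (α : ℕ → B) (n : ℕ) : SeqPrefix ((List.range n).map α) α := by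
  rw [seqPrefix_iff, List.length_map, List.length_range]

theorem posAlign_nil (R : B → B → Prop) (b₀ : B) : PosAlign R b₀ [] := trivial

theorem posAlign_append_singleton (R : B → B → Prop) (b₀ : B) (v : List B) (a : B) :
    PosAlign R b₀ (v ++ [a]) ↔ R (v.getLast?.getD b₀) a := by
  rw [PosAlign, List.reverse_append, List.getLast?_eq_head?_reverse]
  rcases v.reverse with _ | ⟨b, _⟩ <;> rfl

theorem productive_posAlign {R : B → B → Prop} (hR : ∀ b, ∃ b', R b b') (b₀ : B) :
    Productive (PosAlign R b₀) :=
  ⟨PosAlign R b₀, posAlign_nil R b₀, fun v hv =>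
    ⟨hv, (hR _).imp fun _ => (posAlign_append_singleton R b₀ v _).mpr⟩⟩

theorem exists_chain_of_infBranch_posAlign {R : B → B → Prop} {b₀ : B}
    (h : InfBranch (PosAlign R b₀)) :
    ∃ γ : ℕ → B, γ 0 = b₀ ∧ ∀ n, R (γ n) (γ (n + 1)) := by
  obtain ⟨α, hα⟩ := h
  refine ⟨fun | 0 => b₀ | n + 1 => α n, rfl, fun n => ?_⟩
  have hstep := hα _ (seqPrefix_map_range α (n + 1))
  rw [List.range_succ, List.map_append, List.map_singleton, posAlign_append_singleton] at hstep
  cases n with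
  | zero => exact hstep
  | succ m => simpa [List.range_succ] using hstep

theorem exists_eq_map_range_of_forall_eq_append_singleton {γ : ℕ → List B} (h0 : γ 0 = [])
    (hsucc : ∀ n, ∃ a, γ (n + 1) = γ n ++ [a]) :
    ∃ β : ℕ → B, ∀ n, γ n = (List.range n).map β := by
  choose β hβ using hsucc
  refine ⟨β, fun n => ?_⟩
  induction n with
  | zero => simpa using h0
  | succ n ih => rw [hβ, ih, List.range_succ, List.map_append, List.map_singleton]

theorem infBranch_of_productive_of_serial_posAlign.{w} {B : Type w}
    (H : ∀ (S : Type w) (R : S → S → Prop) (s₀ : S),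
      (∀ s, ∃ s', R s s') → InfBranch (PosAlign R s₀))
    {T : List B → Prop} (hT : Productive T) : InfBranch T := by
  obtain ⟨X, hX0, hX⟩ := hT
  let R : {u // X u} → {u // X u} → Prop := fun u v => ∃ a, v.1 = u.1 ++ [a]
  have hR : ∀ u, ∃ v, R u v := fun u => by
    obtain ⟨a, ha⟩ := (hX u.1 u.2).2
    exact ⟨⟨_, ha⟩, a, rfl⟩
  obtain ⟨γ, hγ0, hγ⟩ := exists_chain_of_infBranch_posAlign (H _ R ⟨[], hX0⟩ hR)
  obtain ⟨β, hβ⟩ := exists_eq_map_range_of_forall_eq_append_singleton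
    (γ := fun n => (γ n).1) (by simp [hγ0]) hγ
  refine ⟨β, fun u hu => ?_⟩
  rw [seqPrefix_iff.mp hu, ← hβ]
  exact (hX _ (γ _).2).1

end BarInd

universe u
open BarInd in
theorem stmt10 :
    (∀ (B : Type u) (T : List B → Prop), Productive T → InfBranch T) ↔
    (∀ (B : Type u) (R : B → B → Prop) (b₀ : B),
      (∀ b, ∃ b', R b b') → InfBranch (PosAlign R b₀)) :=
  ⟨fun H B _ b₀ hR => H B _ (productive_posAlign hR b₀),
    fun H _ _ => infBranch_of_productive_of_serial_posAlign H⟩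
end

section
/- Let B be a type. (i) For every predicate T on (ℕ × B)* closed under restriction (v ⊆ v' and v' ∈ T imply v ∈ T): T is ℕ-B-approximable if and only if ‖T‖ is productive. (ii) For every predicate T on B* closed under restriction (u ⋆ b ∈ T implies u ∈ T): the upwards arborification of T̂ is ℕ-B-approximable if and only if T is productive. Dually, (iii) for every predicate T on (ℕ × B)* closed under extension (v ∈ T and v ⊆ v' imply v' ∈ T): T is inductively ℕ-B-barred if and only if ‖T‖ is inductively barred; and (iv) for every predicate T on B* closed under extension: the upwards monotonisation of T̂ is inductively ℕ-B-barred if and only if T is inductively barred. -/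
/-!
A restriction-closed `T` on `(ℕ × B)*` is governed by its values on the sequential sequences
`ord u`: every finite `w ⊆ ord u` can be enlarged to cover any new position `n` by extending `u`
past `n`, and membership in `T` passes from `ord u` down to all its `⊆`-subsets. So an
approximation strategy for `T` may be taken to fill positions in order, which is exactly a
productive strategy for `‖T‖`; dually, a bar for `T` that queries arbitrary positions is replaced
by one that queries all positions up to the largest queried one. Since `ord u ⊆ ord u'` holds
exactly when `u` is a prefix of `u'`, `‖·‖` undoes `T ↦ T̂` after up-arborification of a tree or
up-monotonisation of a monotone predicate, which gives (ii) and (iv).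
-/

namespace BarInd

section Prefix

variable {B : Type*} {T : List B → Prop} {u u' : List B}

lemma IsMono.of_prefix (hT : IsMono T) (h : u <+: u') (hu : T u) : T u' := by
  obtain ⟨t, rfl⟩ := h
  induction t using List.reverseRecOn with
  | nil => simpa using hu
  | append_singleton t b ih => simpa using hT _ b ih

lemma IsTree.of_prefix (hT : IsTree T) (h : u <+: u') (hu' : T u') : T u := by
  obtain ⟨t, rfl⟩ := h
  induction t using List.reverseRecOn with
  | nil => simpa using hu'
  | append_singleton t b ih => exact ih (hT _ b (by simpa using hu'))

lemma exists_extension_of_forall_snoc {Y : List B → Prop}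
    (hY : ∀ v, Y v → ∃ b, Y (v ++ [b])) (hu : Y u) (k : ℕ) :
    ∃ u', u <+: u' ∧ u'.length = u.length + k ∧ Y u' := by
  induction k with
  | zero => exact ⟨u, List.prefix_refl u, rfl, hu⟩
  | succ k ih =>
    obtain ⟨u', hp, hl, hu'⟩ := ih
    obtain ⟨b, hb⟩ := hY u' hu'
    exact ⟨u' ++ [b], hp.trans (List.prefix_append u' [b]), by simp [hl]; omega, hb⟩

lemma HerClos.of_forall_extension {S : List B → Prop} (k : ℕ)
    (h : ∀ u', u <+: u' → u'.length = u.length + k → HerClos S u') : HerClos S u := by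
  induction k generalizing u with
  | zero => exact h u (List.prefix_refl u) rfl
  | succ k ih =>
    refine HerClos.step u fun b => ih fun u' hp hl => h u' ((List.prefix_append u [b]).trans hp) ?_
    simp only [List.length_append, List.length_singleton] at hl
    omega

end Prefix

section OrdSeq

variable {B : Type*} {u u' : List B}

lemma ordSeq_append (u t : List B) :
    ordSeq (u ++ t) = ordSeq u ++ (t.zipIdx u.length).map Prod.swap := by
  simp [ordSeq, List.zipIdx_append]

lemma ordSeq_concat (u : List B) (b : B) : ordSeq (u ++ [b]) = ordSeq u ++ [(u.length, b)] := by
  simp [ordSeq_append]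

lemma mem_ordSeq {n : ℕ} {b : B} : (n, b) ∈ ordSeq u ↔ u[n]? = some b := by
  simp [ordSeq, ← List.mk_mem_zipIdx_iff_getElem?]

lemma not_inDom_ordSeq_length (u : List B) : ¬ InDom (ordSeq u) u.length := by
  rintro ⟨b, hb⟩
  simp [mem_ordSeq] at hb

lemma psub_ordSeq_iff_prefix : PSub (ordSeq u) (ordSeq u') ↔ u <+: u' := by
  refine ⟨fun h => ?_, ?_⟩
  · induction u using List.reverseRecOn with
    | nil => exact List.nil_prefix
    | append_singleton w b ih =>
      have hw : w <+: u' := ih fun x hx => h x (by simp [ordSeq_concat, hx])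
      have hb : u'[w.length]? = some b := mem_ordSeq.mp (h _ (by simp [ordSeq_concat]))
      rw [List.prefix_iff_eq_take] at hw ⊢
      rw [List.length_append, List.length_singleton, List.take_add_one, hb, ← hw]
      rfl
  · rintro ⟨t, rfl⟩ x hx
    rw [ordSeq_append]
    exact List.mem_append_left _ hx

lemma PSub.append_ordSeq {w : List (ℕ × B)} (hw : PSub w (ordSeq u)) (h : u <+: u') {n : ℕ}
    (hn : n < u'.length) : PSub (w ++ [(n, u'[n])]) (ordSeq u') := by
  intro x hx
  rcases List.mem_append.mp hx with hx | hx
  · exact psub_ordSeq_iff_prefix.mpr h x (hw x hx)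
  · rw [List.mem_singleton.mp hx, mem_ordSeq]
    exact List.getElem?_eq_getElem hn

end OrdSeq

section Closures

variable {A B : Type*}

lemma upPairArbor_of_psub (S : List (A × B) → Prop) (v v' : List (A × B)) (h : PSub v v')
    (hv' : UpPairArbor S v') : UpPairArbor S v := by
  obtain ⟨w, hw, hS⟩ := hv'
  exact ⟨w, fun x hx => hw x (h x hx), hS⟩

lemma upPairMonot_of_psub (S : List (A × B) → Prop) (v v' : List (A × B))
    (hv : UpPairMonot S v) (h : PSub v v') : UpPairMonot S v' := by
  obtain ⟨w, hw, hS⟩ := hv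
  exact ⟨w, fun x hx => h x (hw x hx), hS⟩

lemma normT_upPairArbor_hatT {T : List B → Prop} (hT : IsTree T) :
    normT (UpPairArbor (hatT T)) = T := by
  funext u
  refine propext ⟨?_, fun h => ⟨ordSeq u, fun x hx => hx, u, h, rfl⟩⟩
  rintro ⟨_, hsub, u', hu', rfl⟩
  exact hT.of_prefix (psub_ordSeq_iff_prefix.mp hsub) hu'

lemma normT_upPairMonot_hatT {T : List B → Prop} (hT : IsMono T) :
    normT (UpPairMonot (hatT T)) = T := by
  funext u
  refine propext ⟨?_, fun h => ⟨ordSeq u, fun x hx => hx, u, h, rfl⟩⟩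
  rintro ⟨_, hsub, u', hu', rfl⟩
  exact hT.of_prefix (psub_ordSeq_iff_prefix.mp hsub) hu'

end Closures

variable {B : Type*}

theorem approximable_iff_productive_normT (T : List (ℕ × B) → Prop)
    (hT : ∀ v v', PSub v v' → T v' → T v) : Approximable T ↔ Productive (normT T) := by
  constructor
  · rintro ⟨X, hX0, hX⟩
    refine ⟨fun u => X (ordSeq u), hX0, fun u hu => ⟨(hX _ hu).1 _ fun x hx => hx, ?_⟩⟩
    obtain ⟨b, hb⟩ := (hX _ hu).2 u.length (not_inDom_ordSeq_length u)
    exact ⟨b, show X (ordSeq (u ++ [b])) by rwa [ordSeq_concat]⟩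
  · rintro ⟨Y, hY0, hY⟩
    refine ⟨fun w => ∃ u, Y u ∧ PSub w (ordSeq u), ⟨[], hY0, fun x hx => by simp at hx⟩, ?_⟩
    rintro w ⟨u, hu, hw⟩
    refine ⟨fun v hv => hT v _ (fun x hx => hw x (hv x hx)) (hY u hu).1, fun n _ => ?_⟩
    obtain ⟨u', hp, hl, hu'⟩ :=
      exists_extension_of_forall_snoc (fun v hv => (hY v hv).2) hu (n + 1)
    exact ⟨u'[n], u', hu', hw.append_ordSeq hp (by omega)⟩

theorem approximable_upPairArbor_hatT_iff (T : List B → Prop) (hT : IsTree T) :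
    Approximable (UpPairArbor (hatT T)) ↔ Productive T := by
  rw [approximable_iff_productive_normT _ (upPairArbor_of_psub _), normT_upPairArbor_hatT hT]

lemma IndPairBarred.herClos_normT {T : List (ℕ × B) → Prop}
    (hT : ∀ v v', T v → PSub v v' → T v') {w : List (ℕ × B)} (h : IndPairBarred T w)
    (u : List B) (hw : PSub w (ordSeq u)) : HerClos (normT T) u := by
  induction h generalizing u with
  | base w hw' =>
    obtain ⟨v, hvw, hv⟩ := hw'
    exact HerClos.base u (hT v _ hv fun x hx => hw x (hvw x hx))
  | step w n _ _ ih =>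
    -- every extension of `u` by `n + 1 - u.length` entries decides position `n`
    refine HerClos.of_forall_extension (n + 1 - u.length) fun u' hp hl => ?_
    exact ih u'[n] u' (hw.append_ordSeq hp (by omega))

lemma HerClos.indPairBarred_ordSeq {T : List (ℕ × B) → Prop} {u : List B}
    (h : HerClos (normT T) u) : IndPairBarred T (ordSeq u) := by
  induction h with
  | base u hu => exact IndPairBarred.base _ ⟨ordSeq u, fun x hx => hx, hu⟩
  | step u _ ih =>
    refine IndPairBarred.step _ u.length (not_inDom_ordSeq_length u) fun b => ?_
    rw [← ordSeq_concat]
    exact ih b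

theorem inductivelyPairBarred_iff_indBarred_normT (T : List (ℕ × B) → Prop)
    (hT : ∀ v v', T v → PSub v v' → T v') : InductivelyPairBarred T ↔ IndBarred (normT T) :=
  ⟨fun h => h.herClos_normT hT [] fun x hx => by simp at hx,
    HerClos.indPairBarred_ordSeq⟩

theorem inductivelyPairBarred_upPairMonot_hatT_iff (T : List B → Prop) (hT : IsMono T) :
    InductivelyPairBarred (UpPairMonot (hatT T)) ↔ IndBarred T := by
  rw [inductivelyPairBarred_iff_indBarred_normT _ (upPairMonot_of_psub _),
    normT_upPairMonot_hatT hT]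

end BarInd

open BarInd in
theorem stmt13 {B : Type*} :
    (∀ T : List (ℕ × B) → Prop, (∀ v v', PSub v v' → T v' → T v) →
      (Approximable T ↔ Productive (normT T))) ∧
    (∀ T : List B → Prop, (∀ u a, T (u ++ [a]) → T u) →
      (Approximable (UpPairArbor (hatT T)) ↔ Productive T)) ∧
    (∀ T : List (ℕ × B) → Prop, (∀ v v', T v → PSub v v' → T v') →
      (InductivelyPairBarred T ↔ IndBarred (normT T))) ∧
    (∀ T : List B → Prop, (∀ u a, T u → T (u ++ [a])) →
      (InductivelyPairBarred (UpPairMonot (hatT T)) ↔ IndBarred T)) :=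
  ⟨approximable_iff_productive_normT, approximable_upPairArbor_hatT_iff,
    inductivelyPairBarred_iff_indBarred_normT, inductivelyPairBarred_upPairMonot_hatT_iff⟩
end
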